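/- arXiv:1410.1220 — 2 statements merged into one kernel-verified Lean document; each statement's English description precedes it below -/
import Mathlib

section
/- Suppose U : [0,T] → ℝ^{n×n} is a C¹ solution of the symmetric Riccati terminal value problem (SR), and define V(t) := C̃₁ + ∫_t^T (U(s)A − AᵀU(s) + Q̃) ds for t ∈ [0,T]. Then R₂(t) := −(U(t) + V(t)) is a C¹ solution of the nonsymmetric Riccati terminal value problem (NR) on [0,T]. -/
/-!
Since `Q` and `σσᵀ` are symmetric, `Uᵀ` solves (SR) as well, with the same symmetric terminal
value `C₁`. The difference `U - Uᵀ` therefore solves a linear ODE with continuous coefficients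
and vanishes at `T`, so it vanishes identically: `U` is symmetric. Then the integrand of `V` is
skew-symmetric, as is `C̃₁`, so `V` is skew and `R₂ᵀ + R₂ = -2U`. Differentiating,
`R₂' = -U' + (UA - AᵀU + Q̃)`; substituting (SR) and `Q + Q̃ = Υ` gives (NR), and
`R₂(T) = -(C₁ + C̃₁) = Θ`.
-/

open Matrix Set

attribute [local instance] Matrix.normedAddCommGroup Matrix.normedSpace

section Calculus

variable {E : Type*} [NormedAddCommGroup E] [NormedSpace ℝ E] {a b : ℝ}

theorem eqOn_zero_of_hasDerivWithinAt_linearMap_apply [FiniteDimensional ℝ E]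
    {L : ℝ → E →ₗ[ℝ] E} (hL : ∀ x, ContinuousOn (fun t => L t x) (Icc a b)) {f : ℝ → E}
    (hf : ∀ t ∈ Icc a b, HasDerivWithinAt f (L t (f t)) (Icc a b) t) (hb : f b = 0) :
    EqOn f 0 (Icc a b) := by
  set L' : ℝ → E →L[ℝ] E := fun t => LinearMap.toContinuousLinearMap (L t)
  obtain ⟨K, hK⟩ := isCompact_Icc.exists_bound_of_continuousOn
    (continuousOn_clm_apply.2 hL : ContinuousOn L' (Icc a b))
  have hLip : ∀ t ∈ Ioc a b, LipschitzOnWith K.toNNReal (L' t) univ := fun t ht =>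
    (ContinuousLinearMap.lipschitzWith_of_opNorm_le <|
      (hK t (Ioc_subset_Icc_self ht)).trans (Real.le_coe_toNNReal K)).lipschitzOnWith
  refine ODE_solution_unique_of_mem_Icc_left hLip (fun t ht => (hf t ht).continuousWithinAt)
    (fun t ht => (hf t (Ioc_subset_Icc_self ht)).mono_of_mem_nhdsWithin
      (Icc_mem_nhdsLE_of_mem ht))
    (fun _ _ => mem_univ _) continuousOn_const (fun t _ => ?_) (fun _ _ => mem_univ _) hb
  rw [Pi.zero_apply, map_zero]
  exact hasDerivWithinAt_const t (Iic t) 0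

theorem ContinuousOn.hasDerivWithinAt_integral_Icc_left [CompleteSpace E] {f : ℝ → E} {t : ℝ}
    (hf : ContinuousOn f (Icc a b)) (ht : t ∈ Icc a b) :
    HasDerivWithinAt (fun u => ∫ x in u..b, f x) (-f t) (Icc a b) t := by
  have : Fact (t ∈ Icc a b) := ⟨ht⟩
  refine intervalIntegral.integral_hasDerivWithinAt_left ?_
    (hf.stronglyMeasurableAtFilter_nhdsWithin measurableSet_Icc t) (hf t ht)
  exact (hf.mono (uIcc_subset_Icc ht (right_mem_Icc.2 (ht.1.trans ht.2)))).intervalIntegrable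

theorem contDiffOn_one_of_hasDerivWithinAt_Icc {f f' : ℝ → E} (hab : a < b)
    (hf : ∀ t ∈ Icc a b, HasDerivWithinAt f (f' t) (Icc a b) t)
    (hf' : ContinuousOn f' (Icc a b)) : ContDiffOn ℝ 1 f (Icc a b) := by
  rw [contDiffOn_one_iff_derivWithin (uniqueDiffOn_Icc hab)]
  refine ⟨fun t ht => (hf t ht).differentiableWithinAt, hf'.congr fun t ht => ?_⟩
  exact (hf t ht).derivWithin (uniqueDiffOn_Icc hab t ht)

end Calculus

namespace Matrix

theorem transpose_sub_transpose_self {m α : Type*} [AddCommGroup α] (M : Matrix m m α) :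
    (M - Mᵀ)ᵀ = -(M - Mᵀ) := by
  rw [transpose_sub, transpose_transpose, neg_sub]

variable {m n : Type*} [Fintype m] [Fintype n]

def transposeₗᵢ : Matrix m n ℝ →ₗᵢ[ℝ] Matrix n m ℝ :=
  { transposeLinearEquiv m n ℝ ℝ with norm_map' := norm_transpose }

theorem _root_.HasDerivWithinAt.matrix_transpose {f : ℝ → Matrix m n ℝ} {f' : Matrix m n ℝ}
    {s : Set ℝ} {t : ℝ} (hf : HasDerivWithinAt f f' s t) :
    HasDerivWithinAt (fun u => (f u)ᵀ) f'ᵀ s t :=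
  transposeₗᵢ.toContinuousLinearMap.hasFDerivAt.comp_hasDerivWithinAt t hf

theorem transpose_intervalIntegral (f : ℝ → Matrix m n ℝ) (a b : ℝ) :
    (∫ x in a..b, f x)ᵀ = ∫ x in a..b, (f x)ᵀ :=
  (transposeₗᵢ.intervalIntegral_comp_comm f).symm

theorem transpose_intervalIntegral_eq_neg {f : ℝ → Matrix m m ℝ} {a b : ℝ}
    (hf : ∀ x ∈ uIcc a b, (f x)ᵀ = -f x) : (∫ x in a..b, f x)ᵀ = -∫ x in a..b, f x := by
  rw [transpose_intervalIntegral, intervalIntegral.integral_congr hf,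
    intervalIntegral.integral_neg]

theorem transpose_mul_sub_transpose_mul_add {α : Type*} [CommRing α] {A U K : Matrix m m α}
    (hU : U.IsSymm) (hK : Kᵀ = -K) : (U * A - Aᵀ * U + K)ᵀ = -(U * A - Aᵀ * U + K) := by
  rw [transpose_add, transpose_sub, transpose_mul, transpose_mul, transpose_transpose, hU.eq, hK]
  abel

/-- (SR) reads `U' = riccatiField A (σ * σᵀ) Q U`. -/
def riccatiField (A S Q X : Matrix m m ℝ) : Matrix m m ℝ :=
  (2 : ℝ) • (X * S * X) - X * A - Aᵀ * X - Q

def riccatiSecant (A S X Y : Matrix m m ℝ) : Matrix m m ℝ →ₗ[ℝ] Matrix m m ℝ where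
  toFun D := (2 : ℝ) • (X * S * D + D * S * Y) - D * A - Aᵀ * D
  map_add' D E := by simp only [mul_add, add_mul, smul_add]; abel
  map_smul' c D := by
    simp only [smul_mul_assoc, mul_smul_comm, RingHom.id_apply, smul_sub, smul_add,
      smul_comm c (2 : ℝ)]

theorem riccatiSecant_apply (A S X Y D : Matrix m m ℝ) :
    riccatiSecant A S X Y D = (2 : ℝ) • (X * S * D + D * S * Y) - D * A - Aᵀ * D :=
  rfl

theorem riccatiField_sub_riccatiField (A S Q X Y : Matrix m m ℝ) :
    riccatiField A S Q X - riccatiField A S Q Y = riccatiSecant A S X Y (X - Y) := by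
  simp only [riccatiField, riccatiSecant_apply, mul_sub, sub_mul, mul_assoc]
  module

theorem transpose_riccatiField {A S Q : Matrix m m ℝ} (hS : S.IsSymm) (hQ : Q.IsSymm)
    (X : Matrix m m ℝ) : (riccatiField A S Q X)ᵀ = riccatiField A S Q Xᵀ := by
  simp only [riccatiField, transpose_sub, transpose_smul, transpose_mul, transpose_transpose,
    hS.eq, hQ.eq, mul_assoc]
  module

theorem isSymm_of_hasDerivWithinAt_riccatiField {A S Q : Matrix m m ℝ} (hS : S.IsSymm)
    (hQ : Q.IsSymm) {U : ℝ → Matrix m m ℝ} {a b t : ℝ}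
    (hU : ∀ t ∈ Icc a b, HasDerivWithinAt U (riccatiField A S Q (U t)) (Icc a b) t)
    (hb : (U b).IsSymm) (ht : t ∈ Icc a b) : (U t).IsSymm := by
  have hUc : ContinuousOn U (Icc a b) := fun t ht => (hU t ht).continuousWithinAt
  have hL : ∀ D, ContinuousOn (fun t => riccatiSecant A S (U t) (U t)ᵀ D) (Icc a b) :=
    fun D => by simp only [riccatiSecant_apply]; fun_prop
  have hD : ∀ t ∈ Icc a b, HasDerivWithinAt (fun t => U t - (U t)ᵀ)
      (riccatiSecant A S (U t) (U t)ᵀ (U t - (U t)ᵀ)) (Icc a b) t := fun t ht => by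
    rw [← riccatiField_sub_riccatiField, ← transpose_riccatiField hS hQ]
    exact (hU t ht).sub (hU t ht).matrix_transpose
  exact (sub_eq_zero.1 (eqOn_zero_of_hasDerivWithinAt_linearMap_apply hL hD
    (sub_eq_zero.2 hb.eq.symm) ht)).symm

theorem nonsymmetricRiccati_of_isSymm_of_transpose_eq_neg {A S Q Qtilde U V : Matrix m m ℝ}
    (hU : U.IsSymm) (hV : Vᵀ = -V) :
    (U * A - Aᵀ * U + Qtilde - riccatiField A S Q U) + ((-(U + V))ᵀ + -(U + V)) * A
      + (1 / 2 : ℝ) • (((-(U + V))ᵀ + -(U + V)) * S * ((-(U + V))ᵀ + -(U + V)))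
      - (Q + Qtilde) = 0 := by
  have hsum : (-(U + V))ᵀ + -(U + V) = -(2 : ℝ) • U := by
    rw [transpose_neg, transpose_add, hU.eq, hV]; module
  rw [hsum, riccatiField]
  simp only [neg_smul, neg_mul, mul_neg, smul_mul_assoc, mul_smul_comm]
  module

end Matrix

theorem statement6_general (n : ℕ) (T : ℝ) (hT : 0 < T)
    (A σ Υ Θ : Matrix (Fin n) (Fin n) ℝ)
    (Q Qtilde C₁ Ctilde₁ : Matrix (Fin n) (Fin n) ℝ)
    (hQ : Q = (1 / 2 : ℝ) • (Υ + Υᵀ))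
    (hQtilde : Qtilde = (1 / 2 : ℝ) • (Υ - Υᵀ))
    (hC₁ : C₁ = -((1 / 2 : ℝ) • (Θ + Θᵀ)))
    (hCtilde₁ : Ctilde₁ = -((1 / 2 : ℝ) • (Θ - Θᵀ)))
    (U : ℝ → Matrix (Fin n) (Fin n) ℝ)
    (hUsmooth : ContDiffOn ℝ 1 U (Icc 0 T))
    (hUode : ∀ t ∈ Icc 0 T,
      derivWithin U (Icc 0 T) t + U t * A + Aᵀ * U t
        - (2 : ℝ) • (U t * (σ * σᵀ) * U t) + Q = 0)
    (hUT : U T = C₁)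
    (V : ℝ → Matrix (Fin n) (Fin n) ℝ)
    (hV : ∀ t, V t = Ctilde₁ + ∫ s in t..T, (U s * A - Aᵀ * U s + Qtilde))
    (R₂ : ℝ → Matrix (Fin n) (Fin n) ℝ)
    (hR₂ : ∀ t, R₂ t = -(U t + V t)) :
    ContDiffOn ℝ 1 R₂ (Icc 0 T) ∧
    (∀ t ∈ Icc 0 T,
      derivWithin R₂ (Icc 0 T) t + ((R₂ t)ᵀ + R₂ t) * A
        + (1 / 2 : ℝ) • (((R₂ t)ᵀ + R₂ t) * (σ * σᵀ) * ((R₂ t)ᵀ + R₂ t)) - Υ = 0) ∧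
    R₂ T = Θ := by
  have hUc := hUsmooth.continuousOn
  -- `derivWithin` in the hypotheses uses the product topology of matrices, the lemmas the
  -- (definitionally equal) norm topology, so derivatives are transferred by `exact`, not `rw`.
  have hU' : ∀ t ∈ Icc 0 T,
      HasDerivWithinAt U (riccatiField A (σ * σᵀ) Q (U t)) (Icc 0 T) t := fun t ht => by
    have hd : derivWithin U (Icc 0 T) t = riccatiField A (σ * σᵀ) Q (U t) := by
      rw [riccatiField, ← sub_eq_zero, ← hUode t ht]; module
    exact (hUsmooth.differentiableOn one_ne_zero t ht).hasDerivWithinAt.congr_deriv hd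
  have hUsymm : ∀ t ∈ Icc 0 T, (U t).IsSymm := fun t ht =>
    isSymm_of_hasDerivWithinAt_riccatiField (isSymm_mul_transpose_self σ)
      (hQ ▸ (isSymm_add_transpose_self Υ).smul _)
      hU' (hUT ▸ hC₁ ▸ ((isSymm_add_transpose_self Θ).smul _).neg) ht
  set h := fun s => U s * A - Aᵀ * U s + Qtilde
  have hV' : ∀ t ∈ Icc 0 T, HasDerivWithinAt V (-h t) (Icc 0 T) t := fun t ht => by
    rw [funext hV]
    exact ((by fun_prop : ContinuousOn h _).hasDerivWithinAt_integral_Icc_left ht).const_add _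
  have hVskew : ∀ t ∈ Icc 0 T, (V t)ᵀ = -V t := fun t ht => by
    have hQtilde_skew : Qtildeᵀ = -Qtilde := by
      rw [hQtilde, transpose_smul, transpose_sub_transpose_self, smul_neg]
    rw [hV, transpose_add, neg_add, hCtilde₁, transpose_neg, transpose_smul,
      transpose_sub_transpose_self, smul_neg, transpose_intervalIntegral_eq_neg fun s hs =>
        transpose_mul_sub_transpose_mul_add (hUsymm s (uIcc_subset_Icc ht ⟨hT.le, le_rfl⟩ hs))
          hQtilde_skew]
  have hR₂' : ∀ t ∈ Icc 0 T,
      HasDerivWithinAt R₂ (h t - riccatiField A (σ * σᵀ) Q (U t)) (Icc 0 T) t := fun t ht => by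
    rw [funext hR₂]
    exact ((hU' t ht).add (hV' t ht)).neg.congr_deriv (by abel)
  refine ⟨contDiffOn_one_of_hasDerivWithinAt_Icc hT hR₂' (by unfold riccatiField; fun_prop),
    fun t ht => ?_, ?_⟩
  · have hd : derivWithin R₂ (Icc 0 T) t = h t - riccatiField A (σ * σᵀ) Q (U t) :=
      (hR₂' t ht).derivWithin (uniqueDiffOn_Icc hT t ht)
    have hΥ : Υ = Q + Qtilde := by rw [hQ, hQtilde]; module
    rw [hd, hR₂, hΥ]
    exact nonsymmetricRiccati_of_isSymm_of_transpose_eq_neg (hUsymm t ht) (hVskew t ht)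
  · rw [hR₂, hV, intervalIntegral.integral_same, hUT, hC₁, hCtilde₁]; module

/-- If `U` is a C¹ solution of the symmetric Riccati terminal value problem
(SR) and `V(t) = C̃₁ + ∫_t^T (U(s)A - AᵀU(s) + Q̃) ds`, then `R₂ := -(U + V)` is a C¹
solution of the nonsymmetric Riccati terminal value problem (NR) on `[0,T]`. -/
theorem statement6 (n : ℕ) (hn : 1 ≤ n) (T : ℝ) (hT : 0 < T)
    (A σ Υ Θ : Matrix (Fin n) (Fin n) ℝ)
    (Q Qtilde C₁ Ctilde₁ : Matrix (Fin n) (Fin n) ℝ)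
    (hQ : Q = (1 / 2 : ℝ) • (Υ + Υᵀ))
    (hQtilde : Qtilde = (1 / 2 : ℝ) • (Υ - Υᵀ))
    (hC₁ : C₁ = -((1 / 2 : ℝ) • (Θ + Θᵀ)))
    (hCtilde₁ : Ctilde₁ = -((1 / 2 : ℝ) • (Θ - Θᵀ)))
    (U : ℝ → Matrix (Fin n) (Fin n) ℝ)
    (hUsmooth : ContDiffOn ℝ 1 U (Icc 0 T))
    (hUode : ∀ t ∈ Icc 0 T,
      derivWithin U (Icc 0 T) t + U t * A + Aᵀ * U t
        - (2 : ℝ) • (U t * (σ * σᵀ) * U t) + Q = 0)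
    (hUT : U T = C₁)
    (V : ℝ → Matrix (Fin n) (Fin n) ℝ)
    (hV : ∀ t, V t = Ctilde₁ + ∫ s in t..T, (U s * A - Aᵀ * U s + Qtilde))
    (R₂ : ℝ → Matrix (Fin n) (Fin n) ℝ)
    (hR₂ : ∀ t, R₂ t = -(U t + V t)) :
    ContDiffOn ℝ 1 R₂ (Icc 0 T) ∧
    (∀ t ∈ Icc 0 T,
      derivWithin R₂ (Icc 0 T) t + ((R₂ t)ᵀ + R₂ t) * A
        + (1 / 2 : ℝ) • (((R₂ t)ᵀ + R₂ t) * (σ * σᵀ) * ((R₂ t)ᵀ + R₂ t)) - Υ = 0) ∧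
    R₂ T = Θ :=
  statement6_general n T hT A σ Υ Θ Q Qtilde C₁ Ctilde₁ hQ hQtilde hC₁ hCtilde₁ U hUsmooth hUode hUT
    V hV R₂ hR₂
end

section
/- Suppose R₂ᶠ : [0,T] → ℝ^{n×n} is C¹ with R₂ᶠ'(t) + (R₂ᶠ(t)ᵀ + R₂ᶠ(t))A + (1/2)(R₂ᶠ(t)ᵀ + R₂ᶠ(t))σσᵀ(R₂ᶠ(t)ᵀ + R₂ᶠ(t)) − Γ = 0 and R₂ᶠ(T) = Θ; R₁ᶠ : [0,T] → ℝ^{1×n} is C¹ with R₁ᶠ'(t) + R₁ᶠ(t)A + Bᵀ(R₂ᶠ(t)ᵀ + R₂ᶠ(t)) + R₁ᶠ(t)σσᵀ(R₂ᶠ(t)ᵀ + R₂ᶠ(t)) − R = 0 and R₁ᶠ(T) = θ; and R₀ᶠ(t) = γ − ∫_t^T (k − R₁ᶠ(s)B − (1/2)R₁ᶠ(s)σσᵀR₁ᶠ(s)ᵀ − tr(σᵀR₂ᶠ(s)σ)) ds. Then the function h(t,x) := exp(xᵀR₂ᶠ(t)x + R₁ᶠ(t)x + R₀ᶠ(t))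 satisfies, for all (t,x) ∈ [0,T] × ℝⁿ, ∂h/∂t(t,x) + (Ax + B)·∇ₓh(t,x) + (1/2)Σ_{i,j=1}^n (σσᵀ)_{ij} ∂²h/∂xᵢ∂xⱼ(t,x) = (xᵀΓx + Rx + k) h(t,x), together with the terminal condition h(T,x) = exp(xᵀΘx + θx + γ) for all x ∈ ℝⁿ. -/
/-!
Write `h(t, ·) = exp φ(t, ·)` with `φ(t, x) = xᵀR₂x + R₁x + R₀`. Since `φ` is quadratic in `x`,
`∇ₓh = h g` and `∂ᵢ∂ⱼh = h (gᵢgⱼ + Sⱼᵢ)` with `S = R₂ᵀ + R₂` and `g = Sx + R₁ᵀ`. Dividing the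
equation by `h` leaves a polynomial identity in `x`: its quadratic and linear parts are the two
Riccati equations (using that `S` and `σσᵀ` are symmetric), and its constant part is
`R₀' = k - R₁B - ½R₁σσᵀR₁ᵀ - tr(σᵀR₂σ)`, where `tr(σσᵀS) = 2 tr(σᵀR₂σ)`.
-/

open Matrix Set

attribute [local instance] Matrix.normedAddCommGroup Matrix.normedSpace

/-- Partial derivative of `g : ℝⁿ → ℝ` in the `i`-th coordinate at `x`. -/
noncomputable def pd {n : ℕ} (i : Fin n) (g : (Fin n → ℝ) → ℝ) (x : Fin n → ℝ) : ℝ :=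
  deriv (fun s => g (Function.update x i s)) (x i)

theorem ContinuousOn.integral_hasDerivWithinAt_left {E : Type*} [NormedAddCommGroup E]
    [NormedSpace ℝ E] [CompleteSpace E] {f : ℝ → E} {a b t : ℝ}
    (hf : ContinuousOn f (Icc a b)) (ht : t ∈ Icc a b) :
    HasDerivWithinAt (fun u => ∫ x in u..b, f x) (-f t) (Icc a b) t := by
  have : Fact (t ∈ Icc a b) := ⟨ht⟩
  exact intervalIntegral.integral_hasDerivWithinAt_left
    ((hf.mono (uIcc_subset_Icc ht (right_mem_Icc.2 (ht.1.trans ht.2)))).intervalIntegrable)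
    (hf.stronglyMeasurableAtFilter_nhdsWithin measurableSet_Icc t) (hf t ht)

section Curves

variable {𝕜 ι : Type*} [NontriviallyNormedField 𝕜] [Fintype ι] {s : Set 𝕜} {t : 𝕜}

theorem HasDerivWithinAt.dotProduct {u v : 𝕜 → ι → 𝕜} {u' v' : ι → 𝕜}
    (hu : HasDerivWithinAt u u' s t) (hv : HasDerivWithinAt v v' s t) :
    HasDerivWithinAt (fun τ => u τ ⬝ᵥ v τ) (u' ⬝ᵥ v t + u t ⬝ᵥ v') s t := by
  show HasDerivWithinAt (fun τ => ∑ i, u τ i * v τ i)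
    (∑ i, u' i * v t i + ∑ i, u t i * v' i) s t
  rw [← Finset.sum_add_distrib]
  exact HasDerivWithinAt.fun_sum fun i _ =>
    (hasDerivWithinAt_pi.1 hu i).fun_mul (hasDerivWithinAt_pi.1 hv i)

theorem HasDerivWithinAt.mulVec {m : Type*} [Fintype m] {M : 𝕜 → Matrix m ι 𝕜}
    {M' : Matrix m ι 𝕜} {u : 𝕜 → ι → 𝕜} {u' : ι → 𝕜}
    (hM : HasDerivWithinAt M M' s t) (hu : HasDerivWithinAt u u' s t) :
    HasDerivWithinAt (fun τ => M τ *ᵥ u τ) (M' *ᵥ u t + M t *ᵥ u') s t :=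
  hasDerivWithinAt_pi.2 fun i => (hasDerivWithinAt_pi.1 hM i).dotProduct hu

end Curves

theorem Matrix.IsSymm.dotProduct_mulVec_comm {m α : Type*} [Fintype m] [CommSemiring α]
    {S : Matrix m m α} (hS : S.IsSymm) (u v : m → α) : u ⬝ᵥ S *ᵥ v = S *ᵥ u ⬝ᵥ v := by
  rw [dotProduct_mulVec, ← mulVec_transpose, hS.eq]

theorem sum_sum_mul_mul_add_eq_dotProduct_add_trace {m α : Type*} [Fintype m]
    [CommSemiring α] (W S : Matrix m m α) (g : m → α) :
    ∑ i, ∑ j, W i j * (g i * g j + S j i) = g ⬝ᵥ W *ᵥ g + trace (W * S) := by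
  simp only [dotProduct, mulVec, trace, diag, mul_apply, Finset.mul_sum,
    ← Finset.sum_add_distrib]
  exact Finset.sum_congr rfl fun i _ => Finset.sum_congr rfl fun j _ => by ring

section QuadExp

variable {ι : Type*} [Fintype ι]

noncomputable def quadExp (M : Matrix ι ι ℝ) (r : ι → ℝ) (c : ℝ) (y : ι → ℝ) : ℝ :=
  Real.exp (y ⬝ᵥ M *ᵥ y + r ⬝ᵥ y + c)

theorem HasDerivAt.quadExp (M : Matrix ι ι ℝ) (r : ι → ℝ) (c : ℝ) {u : ℝ → ι → ℝ}
    {u' : ι → ℝ} {s : ℝ} (hu : HasDerivAt u u' s) :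
    HasDerivAt (fun τ => quadExp M r c (u τ))
      (quadExp M r c (u s) * (((Mᵀ + M) *ᵥ u s + r) ⬝ᵥ u')) s := by
  rw [← hasDerivWithinAt_univ] at hu ⊢
  have hc : HasDerivWithinAt (fun _ => M) 0 univ s := hasDerivWithinAt_const _ _ _
  have hr : HasDerivWithinAt (fun _ => r) 0 univ s := hasDerivWithinAt_const _ _ _
  refine ((((hu.dotProduct (hc.mulVec hu)).add (hr.dotProduct hu)).add_const c).exp).congr_deriv ?_
  rw [_root_.quadExp]
  congr 1
  simp only [zero_mulVec, zero_add, zero_dotProduct, add_mulVec, add_dotProduct,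
    mulVec_transpose]
  rw [dotProduct_mulVec (u s), dotProduct_comm u']
  ring

theorem HasDerivWithinAt.quadExp_apply {M : ℝ → Matrix ι ι ℝ} {M' : Matrix ι ι ℝ}
    {r : ℝ → ι → ℝ} {r' : ι → ℝ} {c : ℝ → ℝ} {c' : ℝ} {s : Set ℝ} {t : ℝ}
    (hM : HasDerivWithinAt M M' s t) (hr : HasDerivWithinAt r r' s t)
    (hc : HasDerivWithinAt c c' s t) (y : ι → ℝ) :
    HasDerivWithinAt (fun τ => quadExp (M τ) (r τ) (c τ) y)
      (quadExp (M t) (r t) (c t) y * (y ⬝ᵥ M' *ᵥ y + r' ⬝ᵥ y + c')) s t := by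
  have hy : HasDerivWithinAt (fun _ => y) 0 s t := hasDerivWithinAt_const _ _ _
  refine ((((hy.dotProduct (hM.mulVec hy)).add (hr.dotProduct hy)).add hc).exp).congr_deriv ?_
  simp [quadExp]

end QuadExp

section PartialDerivatives

variable {n : ℕ}

theorem pd_quadExp (M : Matrix (Fin n) (Fin n) ℝ) (r : Fin n → ℝ) (c : ℝ) (x : Fin n → ℝ)
    (j : Fin n) : pd j (quadExp M r c) x = quadExp M r c x * ((Mᵀ + M) *ᵥ x + r) j := by
  simpa [pd] using ((hasDerivAt_update x j (x j)).quadExp M r c).deriv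

theorem pd_pd_quadExp (M : Matrix (Fin n) (Fin n) ℝ) (r : Fin n → ℝ) (c : ℝ) (x : Fin n → ℝ)
    (i j : Fin n) :
    pd i (pd j (quadExp M r c)) x = quadExp M r c x *
      (((Mᵀ + M) *ᵥ x + r) i * ((Mᵀ + M) *ᵥ x + r) j + (Mᵀ + M) j i) := by
  have hu := hasDerivAt_update x i (x i)
  have hg : HasDerivAt (fun s => ((Mᵀ + M) *ᵥ Function.update x i s + r) j) ((Mᵀ + M) j i)
      (x i) := by
    rw [← hasDerivWithinAt_univ] at hu ⊢
    simpa using hasDerivWithinAt_pi.1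
      (((hasDerivWithinAt_const _ _ (Mᵀ + M)).mulVec hu).add_const r) j
  rw [show pd j (quadExp M r c) = _ from funext fun y => pd_quadExp M r c y j, pd]
  rw [((hu.quadExp M r c).fun_mul hg).deriv]
  simp only [Function.update_eq_self, dotProduct_single_one, Pi.add_apply]
  ring

end PartialDerivatives

theorem riccati_generator_eq {m : Type*} [Fintype m] (A σ Γ M M' : Matrix m m ℝ)
    (B : Matrix m (Fin 1) ℝ) (R P P' : Matrix (Fin 1) m ℝ) (k : ℝ) (x : m → ℝ)
    (hM' : M' + (Mᵀ + M) * A + (1 / 2 : ℝ) • ((Mᵀ + M) * (σ * σᵀ) * (Mᵀ + M)) - Γ = 0)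
    (hP' : P' + P * A + Bᵀ * (Mᵀ + M) + P * (σ * σᵀ) * (Mᵀ + M) - R = 0) :
    x ⬝ᵥ M' *ᵥ x + P' 0 ⬝ᵥ x
        + (k - (P * B) 0 0 - 1 / 2 * (P * (σ * σᵀ) * Pᵀ) 0 0 - trace (σᵀ * M * σ))
      + ∑ i, ((A *ᵥ x) i + B i 0) * ((Mᵀ + M) *ᵥ x + P 0) i
      + 1 / 2 * ∑ i, ∑ j, (σ * σᵀ) i j *
          (((Mᵀ + M) *ᵥ x + P 0) i * ((Mᵀ + M) *ᵥ x + P 0) j + (Mᵀ + M) j i)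
      = x ⬝ᵥ Γ *ᵥ x + (R *ᵥ x) 0 + k := by
  have hS := isSymm_transpose_add_self M
  have hW := isSymm_mul_transpose_self σ
  have htr : trace (σ * σᵀ * (Mᵀ + M)) = 2 * trace (σᵀ * M * σ) := by
    have hWM : trace (σ * σᵀ * M) = trace (σᵀ * M * σ) := by
      rw [Matrix.mul_assoc σ σᵀ M, trace_mul_comm]
    rw [mul_add, trace_add, ← trace_transpose (σ * σᵀ * Mᵀ), transpose_mul, transpose_transpose,
      hW.eq, trace_mul_comm, hWM, two_mul]
  rw [sum_sum_mul_mul_add_eq_dotProduct_add_trace, htr]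
  set S := Mᵀ + M
  set W := σ * σᵀ
  obtain rfl : M' = Γ - S * A - (1 / 2 : ℝ) • (S * W * S) := by
    rw [← sub_eq_zero, ← hM']; abel
  obtain rfl : P' = R - P * A - Bᵀ * S - P * W * S := by
    rw [← sub_eq_zero, ← hP']; abel
  have hPWP : (P * W * Pᵀ) 0 0 = P 0 ⬝ᵥ W *ᵥ P 0 := by rw [dotProduct_mulVec]; rfl
  -- Read the rows `P` and `Bᵀ` as the vectors `P 0` and `Bᵀ 0`.
  change x ⬝ᵥ _ *ᵥ x + (_ *ᵥ x) 0 + (k - P 0 ⬝ᵥ Bᵀ 0 - _ - _)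
    + (A *ᵥ x + Bᵀ 0) ⬝ᵥ (S *ᵥ x + P 0) + _ = _
  rw [hPWP]
  simp only [sub_mulVec, smul_mulVec, ← mulVec_mulVec, Pi.sub_apply, dotProduct_sub,
    dotProduct_smul, smul_eq_mul, add_dotProduct, dotProduct_add, mulVec_add]
  simp only [mulVec_apply, row]
  rw [hS.dotProduct_mulVec_comm x (A *ᵥ x), hS.dotProduct_mulVec_comm x,
    hW.dotProduct_mulVec_comm (S *ᵥ x) (P 0), dotProduct_comm (S *ᵥ x) (A *ᵥ x),
    dotProduct_comm (A *ᵥ x) (P 0), dotProduct_comm (Bᵀ 0) (P 0), dotProduct_comm (W *ᵥ S *ᵥ x)]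
  ring

theorem statement13_general (n : ℕ) (T : ℝ) (hT : 0 < T)
    (A σ : Matrix (Fin n) (Fin n) ℝ) (B : Matrix (Fin n) (Fin 1) ℝ)
    (Γ : Matrix (Fin n) (Fin n) ℝ)
    (Θ : Matrix (Fin n) (Fin n) ℝ)
    (R θ : Matrix (Fin 1) (Fin n) ℝ) (k γ : ℝ)
    (R₂ : ℝ → Matrix (Fin n) (Fin n) ℝ)
    (hR₂smooth : ContDiffOn ℝ 1 R₂ (Icc 0 T))
    (hR₂ode : ∀ t ∈ Icc 0 T,
      derivWithin R₂ (Icc 0 T) t + ((R₂ t)ᵀ + R₂ t) * A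
        + (1 / 2 : ℝ) • (((R₂ t)ᵀ + R₂ t) * (σ * σᵀ) * ((R₂ t)ᵀ + R₂ t)) - Γ = 0)
    (hR₂T : R₂ T = Θ)
    (R₁ : ℝ → Matrix (Fin 1) (Fin n) ℝ)
    (hR₁smooth : ContDiffOn ℝ 1 R₁ (Icc 0 T))
    (hR₁ode : ∀ t ∈ Icc 0 T,
      derivWithin R₁ (Icc 0 T) t + R₁ t * A + Bᵀ * ((R₂ t)ᵀ + R₂ t)
        + R₁ t * (σ * σᵀ) * ((R₂ t)ᵀ + R₂ t) - R = 0)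
    (hR₁T : R₁ T = θ)
    (R₀ : ℝ → ℝ)
    (hR₀ : ∀ t, R₀ t = γ - ∫ s in t..T,
      (k - (R₁ s * B) 0 0 - (1 / 2) * (R₁ s * (σ * σᵀ) * (R₁ s)ᵀ) 0 0
        - Matrix.trace (σᵀ * R₂ s * σ)))
    (h : ℝ → (Fin n → ℝ) → ℝ)
    (hh : ∀ t x, h t x =
      Real.exp (x ⬝ᵥ (R₂ t).mulVec x + (R₁ t).mulVec x 0 + R₀ t)) :
    (∀ t ∈ Icc 0 T, ∀ x : Fin n → ℝ,
      derivWithin (fun τ => h τ x) (Icc 0 T) t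
        + (∑ i, (A.mulVec x i + B i 0) * pd i (h t) x)
        + (1 / 2) * ∑ i, ∑ j, (σ * σᵀ) i j * pd i (pd j (h t)) x
      = (x ⬝ᵥ Γ.mulVec x + R.mulVec x 0 + k) * h t x) ∧
    (∀ x : Fin n → ℝ, h T x =
      Real.exp (x ⬝ᵥ Θ.mulVec x + θ.mulVec x 0 + γ)) := by
  have hquad : ∀ τ, h τ = quadExp (R₂ τ) (R₁ τ 0) (R₀ τ) := fun τ => funext (hh τ)
  refine ⟨fun t ht x => ?_, fun x => ?_⟩
  · -- Typed explicitly, so that `derivWithin` carries the same instances as in `hR₂ode`.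
    have hR₂' : HasDerivWithinAt R₂ (derivWithin R₂ (Icc 0 T) t) (Icc 0 T) t :=
      (hR₂smooth.differentiableOn one_ne_zero t ht).hasDerivWithinAt
    have hR₁' : HasDerivWithinAt R₁ (derivWithin R₁ (Icc 0 T) t) (Icc 0 T) t :=
      (hR₁smooth.differentiableOn one_ne_zero t ht).hasDerivWithinAt
    have hR₀' : HasDerivWithinAt R₀ (k - (R₁ t * B) 0 0 - 1 / 2 * (R₁ t * (σ * σᵀ) * (R₁ t)ᵀ) 0 0
        - trace (σᵀ * R₂ t * σ)) (Icc 0 T) t := by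
      have := hR₁smooth.continuousOn
      have := hR₂smooth.continuousOn
      rw [funext hR₀]
      simpa using ((ContinuousOn.integral_hasDerivWithinAt_left (by fun_prop) ht).const_sub γ)
    have hdt := ((hR₂'.quadExp_apply (hasDerivWithinAt_pi.1 hR₁' 0) hR₀' x).derivWithin
      (uniqueDiffOn_Icc hT t ht))
    simp only [hquad, hdt, pd_quadExp, pd_pd_quadExp, mul_left_comm _ (quadExp _ _ _ x),
      ← Finset.mul_sum]
    rw [← riccati_generator_eq A σ Γ (R₂ t) _ B R (R₁ t) _ k x (hR₂ode t ht) (hR₁ode t ht)]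
    ring
  · rw [hh, hR₂T, hR₁T, hR₀, intervalIntegral.integral_same, sub_zero]

/-- With `R₂ᶠ`, `R₁ᶠ` solving the forward Riccati equations and `R₀ᶠ` its
integral, `h(t,x) = exp(xᵀR₂ᶠ(t)x + R₁ᶠ(t)x + R₀ᶠ(t))` solves the PDE
`∂h/∂t + (Ax+B)·∇ₓh + (1/2)Σ (σσᵀ)ᵢⱼ ∂²h/∂xᵢ∂xⱼ = (xᵀΓx + Rx + k) h` with terminal value
`h(T,x) = exp(xᵀΘx + θx + γ)`. -/
theorem statement13 (n : ℕ) (hn : 1 ≤ n) (T : ℝ) (hT : 0 < T)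
    (A σ : Matrix (Fin n) (Fin n) ℝ) (B : Matrix (Fin n) (Fin 1) ℝ)
    (Γ : Matrix (Fin n) (Fin n) ℝ) (hΓ : Γ.PosSemidef)
    (Θ : Matrix (Fin n) (Fin n) ℝ)
    (R θ : Matrix (Fin 1) (Fin n) ℝ) (k γ : ℝ)
    (R₂ : ℝ → Matrix (Fin n) (Fin n) ℝ)
    (hR₂smooth : ContDiffOn ℝ 1 R₂ (Icc 0 T))
    (hR₂ode : ∀ t ∈ Icc 0 T,
      derivWithin R₂ (Icc 0 T) t + ((R₂ t)ᵀ + R₂ t) * A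
        + (1 / 2 : ℝ) • (((R₂ t)ᵀ + R₂ t) * (σ * σᵀ) * ((R₂ t)ᵀ + R₂ t)) - Γ = 0)
    (hR₂T : R₂ T = Θ)
    (R₁ : ℝ → Matrix (Fin 1) (Fin n) ℝ)
    (hR₁smooth : ContDiffOn ℝ 1 R₁ (Icc 0 T))
    (hR₁ode : ∀ t ∈ Icc 0 T,
      derivWithin R₁ (Icc 0 T) t + R₁ t * A + Bᵀ * ((R₂ t)ᵀ + R₂ t)
        + R₁ t * (σ * σᵀ) * ((R₂ t)ᵀ + R₂ t) - R = 0)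
    (hR₁T : R₁ T = θ)
    (R₀ : ℝ → ℝ)
    (hR₀ : ∀ t, R₀ t = γ - ∫ s in t..T,
      (k - (R₁ s * B) 0 0 - (1 / 2) * (R₁ s * (σ * σᵀ) * (R₁ s)ᵀ) 0 0
        - Matrix.trace (σᵀ * R₂ s * σ)))
    (h : ℝ → (Fin n → ℝ) → ℝ)
    (hh : ∀ t x, h t x =
      Real.exp (x ⬝ᵥ (R₂ t).mulVec x + (R₁ t).mulVec x 0 + R₀ t)) :
    (∀ t ∈ Icc 0 T, ∀ x : Fin n → ℝ,
      derivWithin (fun τ => h τ x) (Icc 0 T) t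
        + (∑ i, (A.mulVec x i + B i 0) * pd i (h t) x)
        + (1 / 2) * ∑ i, ∑ j, (σ * σᵀ) i j * pd i (pd j (h t)) x
      = (x ⬝ᵥ Γ.mulVec x + R.mulVec x 0 + k) * h t x) ∧
    (∀ x : Fin n → ℝ, h T x =
      Real.exp (x ⬝ᵥ Θ.mulVec x + θ.mulVec x 0 + γ)) :=
  statement13_general n T hT A σ B Γ Θ R θ k γ R₂ hR₂smooth hR₂ode hR₂T R₁ hR₁smooth hR₁ode hR₁T R₀
    hR₀ h hh
end
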